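/- Let w be a prefix of the infinite m-bonacci word h_ω with |u_n| + |t_n| < |w| ≤ |u_{n+1}| for the unique such n ≥ 2 (a prefix of type-1). Then w is closed; more precisely, writing w = u_n t_n x with x a non-empty prefix of h_{n-2}^R, the word u_{n-1} x is a border of w with no internal occurrence in w. -/

import Mathlib

/-- The `m`-bonacci morphism on letters: `i ↦ 0(i+1)` for `i ≤ m-2`, `(m-1) ↦ 0`. -/
def phi (m a : ℕ) : List ℕ := if a = m - 1 then [0] else [0, a + 1]

/-- The `m`-bonacci morphism on words. -/
def phiW (m : ℕ) (w : List ℕ) : List ℕ := w.flatMap (phi m)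

/-- The finite `m`-bonacci words `h_n = φ_m^n(0)`. -/
def hb (m : ℕ) : ℕ → List ℕ
  | 0 => [0]
  | n+1 => phiW m (hb m n)

/-- The palindromic prefixes of the `m`-bonacci word, shifted:
`ub m n` is the paper's `u_{n+1}` (so `ub m 0 = u₁ = ε`, and `u_{n+2} = h_n u_{n+1}`). -/
def ub (m : ℕ) : ℕ → List ℕ
  | 0 => []
  | n+1 => hb m n ++ ub m n

/-- Number of occurrences of `x` as a factor of `w` (counted by starting position). -/
def occ (x w : List ℕ) : ℕ :=
  ((List.range (w.length + 1)).filter (fun i => x.isPrefixOf (w.drop i))).length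

/-- A word is closed if it is a single letter or has a border (a proper factor that
is both a prefix and a suffix) occurring exactly twice in it. -/
def ClosedWord (w : List ℕ) : Prop :=
  w.length = 1 ∨
    ∃ x : List ℕ, x ≠ [] ∧ x.length < w.length ∧ x <+: w ∧ x <:+ w ∧ occ x w = 2

/-- The word `t_n` (for `n ≥ 2`), defined by `h_{n-1}^R = t_n h_{n-2}^R`, so that
`u_{n+1} = u_n t_n h_{n-2}^R`; explicitly `t_n = (n-1) h₀^R ⋯ h_{n-3}^R` for
`2 ≤ n ≤ m-1` and `t_n = h_{n-m-1}^R h_{n-m}^R ⋯ h_{n-3}^R` for `n ≥ m`. -/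
def tb (m n : ℕ) : List ℕ :=
  ((hb m (n - 1)).reverse).take ((hb m (n - 1)).length - (hb m (n - 2)).length)

/-!
Write `n = N + 2`. Since `ub` is palindromic, `ub m (N + 2) = hb m (N + 1) ++ ub m N ++ (hb m N)ᴿ`
and `ub m (N + 1) ++ tb m (N + 2) = hb m (N + 1) ++ ub m N`, so a type-1 prefix is
`w = hb m (N + 1) ++ ub m N ++ x` with `x` a non-empty prefix of `(hb m N)ᴿ`; in particular `x`
starts with the last letter `N % m` of `hb m N`. Then `ub m N ++ x` is a suffix of `w` and a
prefix of `ub m (N + 1) = ub m N ++ (hb m N)ᴿ`, hence of `w`. Any occurrence of it in `w` yields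
an occurrence of `ub m N ++ [N % m]` in `hb m (N + 1) ++ ub m N ++ [N % m]`, and by
desubstituting `phi` one level at a time these occur only at the two ends.
-/

open List

section

variable {m : ℕ}

@[simp] lemma phiW_nil : phiW m [] = [] := rfl

@[simp] lemma phiW_cons (a : ℕ) (w : List ℕ) : phiW m (a :: w) = phi m a ++ phiW m w := rfl

@[simp] lemma phiW_append (u v : List ℕ) : phiW m (u ++ v) = phiW m u ++ phiW m v := by
  simp [phiW]

lemma phi_pred_self : phi m (m - 1) = [0] := if_pos rfl

lemma phi_of_ne {a : ℕ} (ha : a ≠ m - 1) : phi m a = [0, a + 1] := if_neg ha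

lemma zero_prefix_phi (a : ℕ) : [0] <+: phi m a := by
  unfold phi; split_ifs <;> simp

lemma phiW_prefix_phiW {u v : List ℕ} (h : u <+: v) : phiW m u <+: phiW m v := by
  obtain ⟨r, rfl⟩ := h
  exact ⟨phiW m r, (phiW_append u r).symm⟩

lemma exists_phiW_append_zero_cons (x s : List ℕ) : ∃ t, phiW m x ++ 0 :: s = 0 :: t := by
  cases x with
  | nil => exact ⟨s, rfl⟩
  | cons a x =>
    by_cases ha : a = m - 1
    · exact ⟨phiW m x ++ 0 :: s, by simp [ha, phi_pred_self]⟩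
    · exact ⟨(a + 1) :: (phiW m x ++ 0 :: s), by simp [phi_of_ne ha]⟩

lemma phi_append_prefix_cancel {a b : ℕ} {s t : List ℕ}
    (h : phi m a ++ 0 :: s <+: phi m b ++ 0 :: t) : a = b ∧ 0 :: s <+: 0 :: t := by
  by_cases ha : a = m - 1 <;> by_cases hb : b = m - 1 <;>
    simp_all [phi_pred_self, phi_of_ne]

/-- Each image `phi m a` is a `0` followed by at most one nonzero letter, so the zeros of
`phiW m v` are exactly the cuts between the images of the letters of `v`. -/
lemma exists_eq_phiW_of_append_prefix {p r v : List ℕ} (h : p ++ 0 :: r <+: phiW m v ++ [0]) :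
    ∃ v₁ v₂, v = v₁ ++ v₂ ∧ p = phiW m v₁ := by
  induction v generalizing p with
  | nil =>
    have hlen := h.length_le
    simp only [length_append, length_cons, phiW_nil, length_nil] at hlen
    obtain rfl : p = [] := eq_nil_of_length_eq_zero (by omega)
    exact ⟨[], [], rfl, rfl⟩
  | cons a v ih =>
    rcases p with _ | ⟨c, p⟩
    · exact ⟨[], a :: v, rfl, rfl⟩
    by_cases ha : a = m - 1
    · obtain ⟨rfl, h'⟩ : c = 0 ∧ p ++ 0 :: r <+: phiW m v ++ [0] := by
        simpa [ha, phi_pred_self] using h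
      obtain ⟨v₁, v₂, rfl, rfl⟩ := ih h'
      exact ⟨a :: v₁, v₂, rfl, by simp [ha, phi_pred_self]⟩
    · obtain ⟨rfl, hp⟩ : c = 0 ∧ p ++ 0 :: r <+: (a + 1) :: (phiW m v ++ [0]) := by
        simpa [phi_of_ne ha] using h
      rcases p with _ | ⟨d, p⟩
      · simp at hp
      obtain ⟨rfl, h'⟩ : d = a + 1 ∧ p ++ 0 :: r <+: phiW m v ++ [0] := by simpa using hp
      obtain ⟨v₁, v₂, rfl, rfl⟩ := ih h'
      exact ⟨a :: v₁, v₂, rfl, by simp [phi_of_ne ha]⟩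

lemma exists_eq_append_of_phiW_append_prefix {x y s : List ℕ}
    (h : phiW m x ++ 0 :: s <+: phiW m y ++ [0]) :
    ∃ y', y = x ++ y' ∧ 0 :: s <+: phiW m y' ++ [0] := by
  induction x generalizing y with
  | nil => exact ⟨y, rfl, h⟩
  | cons a x ih =>
    rcases y with _ | ⟨b, y⟩
    · have hlen := h.length_le
      by_cases ha : a = m - 1 <;> simp [ha, phi_pred_self, phi_of_ne] at hlen
    obtain ⟨t, ht⟩ := exists_phiW_append_zero_cons (m := m) x s
    obtain ⟨t', ht'⟩ := exists_phiW_append_zero_cons (m := m) y []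
    have h' : phi m a ++ 0 :: t <+: phi m b ++ 0 :: t' := by
      simpa [← ht, ← ht'] using h
    obtain ⟨rfl, htail⟩ := phi_append_prefix_cancel h'
    obtain ⟨y', rfl, hy'⟩ := ih (y := y) (by rwa [← ht, ← ht'] at htail)
    exact ⟨y', rfl, hy'⟩

lemma add_one_mod_eq_ite (hm : 0 < m) (k : ℕ) :
    (k + 1) % m = if k % m = m - 1 then 0 else k % m + 1 := by
  obtain rfl | hm := (Nat.succ_le_of_lt hm).eq_or_lt
  · simp [Nat.mod_one]
  have hk := Nat.mod_lt k (by omega : 0 < m)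
  rw [Nat.add_mod, Nat.one_mod_eq_one.mpr (by omega)]
  split_ifs with h
  · rw [h, Nat.sub_add_cancel (by omega), Nat.mod_self]
  · exact Nat.mod_eq_of_lt (by omega)

lemma phi_mod (hm : 0 < m) (k : ℕ) :
    phi m (k % m) = [0, (k + 1) % m] ∨ phi m (k % m) = [0] ∧ (k + 1) % m = 0 := by
  rw [add_one_mod_eq_ite hm]
  split_ifs with h
  · exact Or.inr ⟨h ▸ phi_pred_self, rfl⟩
  · exact Or.inl (phi_of_ne h)

lemma prefix_phi_mod_append_zero (hm : 0 < m) (k : ℕ) :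
    [0, (k + 1) % m] <+: phi m (k % m) ++ [0] := by
  rcases phi_mod hm k with h | ⟨h, h'⟩
  · simp [h]
  · simp [h, h']

lemma eq_mod_of_prefix_phi_append (hm : 0 < m) {k b : ℕ} {t : List ℕ}
    (h : [0, (k + 1) % m] <+: phi m b ++ 0 :: t) : b = k % m := by
  rw [add_one_mod_eq_ite hm] at h
  by_cases hb : b = m - 1
  · split_ifs at h <;> simp_all [phi_pred_self]
  · split_ifs at h <;> simp_all [phi_of_ne hb]

lemma concat_mod_prefix_of_phiW_prefix (hm : 0 < m) {k : ℕ} {x y : List ℕ}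
    (h : phiW m x ++ [0, (k + 1) % m] <+: phiW m y ++ [0]) : x ++ [k % m] <+: y := by
  obtain ⟨y', rfl, hy'⟩ := exists_eq_append_of_phiW_append_prefix h
  rw [prefix_append_right_inj]
  rcases y' with _ | ⟨b, y'⟩
  · simp at hy'
  obtain ⟨t, ht⟩ := exists_phiW_append_zero_cons (m := m) y' []
  rw [phiW_cons, append_assoc, ht] at hy'
  rw [eq_mod_of_prefix_phi_append hm hy']
  exact prefix_append _ _

lemma hb_one (hm : 2 ≤ m) : hb m 1 = [0, 1] := by
  simp [hb, phi_of_ne (show 0 ≠ m - 1 by omega)]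

lemma hb_prefix_hb_succ (k : ℕ) : hb m k <+: hb m (k + 1) := by
  induction k with
  | zero => simpa [hb] using zero_prefix_phi 0
  | succ k ih => exact phiW_prefix_phiW ih

lemma hb_prefix_hb_of_le {k l : ℕ} (h : k ≤ l) : hb m k <+: hb m l := by
  induction l, h using Nat.le_induction with
  | base => exact prefix_rfl
  | succ l _ ih => exact ih.trans (hb_prefix_hb_succ l)

lemma exists_hb_eq_concat_mod (hm : 0 < m) (k : ℕ) : ∃ q, hb m k = q ++ [k % m] := by
  induction k with
  | zero => exact ⟨[], by simp [hb]⟩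
  | succ k ih =>
    obtain ⟨q, hq⟩ := ih
    have hk : hb m (k + 1) = phiW m q ++ phi m (k % m) := by simp [hb, hq]
    rcases phi_mod hm k with h | ⟨h, h'⟩
    · exact ⟨phiW m q ++ [0], by simp [hk, h]⟩
    · exact ⟨phiW m q, by simp [hk, h, h']⟩

lemma hb_ne_nil (k : ℕ) : hb m k ≠ [] :=
  ne_nil_of_length_pos (hb_prefix_hb_of_le (Nat.zero_le k)).length_le

lemma ub_succ_eq_phiW (k : ℕ) : ub m (k + 1) = phiW m (ub m k) ++ [0] := by
  induction k with
  | zero => simp [ub, hb, phiW]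
  | succ k ih =>
    conv_lhs => rw [ub, ih]
    rw [hb, ← append_assoc, ← phiW_append, ub]

lemma hb_eq_ub_concat {k : ℕ} (hk : k < m) : hb m k = ub m k ++ [k] := by
  induction k with
  | zero => rfl
  | succ k ih =>
    rw [ub_succ_eq_phiW, hb, ih (by omega)]
    simp [phi_of_ne (show k ≠ m - 1 by omega)]

lemma ub_eq_hb_append (hm : 0 < m) {k : ℕ} (hk : m ≤ k) : ub m k = hb m k ++ ub m (k - m) := by
  induction k, hk using Nat.le_induction with
  | base =>
    obtain ⟨l, rfl⟩ : ∃ l, m = l + 1 := ⟨m - 1, by omega⟩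
    rw [hb, hb_eq_ub_concat (by omega), ub_succ_eq_phiW]
    have hl : phi (l + 1) l = [0] := phi_pred_self
    simp [hl, ub]
  | succ k hk ih =>
    rw [ub_succ_eq_phiW, ih, hb, phiW_append, append_assoc, ← ub_succ_eq_phiW,
      Nat.sub_add_comm hk]

lemma ub_reverse (hm : 0 < m) (k : ℕ) : (ub m k).reverse = ub m k := by
  induction k using Nat.strong_induction_on with
  | _ k ih =>
    rcases k with _ | k
    · rfl
    have ihk := ih k (by omega)
    rw [ub, reverse_append, ihk]
    rcases Nat.lt_or_ge k m with hk | hk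
    · simp [hb_eq_ub_concat hk, ihk]
    · have hsplit := ub_eq_hb_append hm hk
      have hsplit' : ub m k = ub m (k - m) ++ (hb m k).reverse := by
        rw [← ihk, hsplit, reverse_append, ih (k - m) (by omega)]
      conv_lhs => rw [hsplit]
      rw [append_assoc, ← hsplit']

lemma ub_succ_eq_append_reverse (hm : 0 < m) (k : ℕ) :
    ub m (k + 1) = ub m k ++ (hb m k).reverse := by
  rw [← ub_reverse hm, ub, reverse_append, ub_reverse hm]

lemma ub_concat_mod_prefix_hb (hm : 2 ≤ m) (k : ℕ) : ub m k ++ [k % m] <+: hb m (k + 1) := by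
  induction k with
  | zero => rw [hb_one hm]; exact ⟨[1], by simp [ub]⟩
  | succ k ih =>
    obtain ⟨r, hr⟩ := ih
    obtain ⟨a, r, rfl⟩ : ∃ a r', r = a :: r' := by
      refine exists_cons_of_ne_nil fun hr0 => ?_
      obtain ⟨q, hq⟩ := exists_hb_eq_concat_mod (by omega : 0 < m) (k + 1)
      rw [hr0, append_nil, hq] at hr
      have := (append_inj' hr rfl).2
      simp [add_one_mod_eq_ite (by omega : 0 < m)] at this
      split_ifs at this <;> omega
    have hk : hb m (k + 2) = phiW m (ub m k) ++ phi m (k % m) ++ phi m a ++ phiW m r := by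
      rw [hb, ← hr]; simp
    rw [hk, ub_succ_eq_phiW, append_assoc, append_assoc, append_assoc, prefix_append_right_inj]
    exact (prefix_phi_mod_append_zero (by omega) k).trans
      ((prefix_append_right_inj _).2 ((zero_prefix_phi a).trans (prefix_append _ _)))

/-- Desubstitution: both words at level `J + 1` are, up to a trailing `0`, `phiW`-images of
those at level `J`, and every occurrence at level `J + 1` is the image of one at level `J`. -/
lemma eq_nil_or_eq_hb_of_append_prefix (hm : 2 ≤ m) (J : ℕ) {p : List ℕ}
    (h : p ++ (ub m J ++ [J % m]) <+: hb m (J + 1) ++ ub m J ++ [J % m]) :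
    p = [] ∨ p = hb m (J + 1) := by
  induction J generalizing p with
  | zero =>
    rw [hb_one hm] at h ⊢
    rcases p with _ | ⟨a, _ | ⟨b, _ | ⟨c, p⟩⟩⟩ <;> simp_all [ub]
  | succ J ih =>
    have hW : hb m (J + 2) ++ ub m (J + 1) ++ [(J + 1) % m] <+:
        phiW m (hb m (J + 1) ++ ub m J ++ [J % m]) ++ [0] := by
      rw [ub_succ_eq_phiW, hb]
      simpa using prefix_phi_mod_append_zero (by omega) J
    have hpW := h.trans hW
    rw [ub_succ_eq_phiW, append_assoc, append_assoc, singleton_append] at hpW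
    obtain ⟨t, ht⟩ := exists_phiW_append_zero_cons (m := m) (ub m J) [(J + 1) % m]
    obtain ⟨v₁, v₂, hv, rfl⟩ := exists_eq_phiW_of_append_prefix (ht ▸ hpW)
    rw [hv, phiW_append, append_assoc, prefix_append_right_inj] at hpW
    have hv₂ := concat_mod_prefix_of_phiW_prefix (by omega) hpW
    have hv₁ : v₁ ++ (ub m J ++ [J % m]) <+: hb m (J + 1) ++ ub m J ++ [J % m] := by
      rw [append_assoc, hv]
      exact (prefix_append_right_inj v₁).2 hv₂
    rcases ih hv₁ with rfl | rfl
    · exact Or.inl rfl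
    · exact Or.inr rfl

lemma eq_nil_or_eq_hb_of_append_cons_prefix (hm : 2 ≤ m) (J : ℕ) {p x : List ℕ}
    (h : p ++ (ub m J ++ J % m :: x) <+: hb m (J + 1) ++ ub m J ++ J % m :: x) :
    p = [] ∨ p = hb m (J + 1) := by
  have hlen := h.length_le
  simp only [length_append, length_cons] at hlen
  refine eq_nil_or_eq_hb_of_append_prefix hm J
    (prefix_of_prefix_length_le (l₃ := hb m (J + 1) ++ ub m J ++ J % m :: x) ?_ ?_ ?_)
  · exact .trans (by simp) h
  · simp
  · simp only [length_append, length_cons, length_nil]; omega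

lemma ub_succ_append_tb (hm : 0 < m) (N : ℕ) :
    ub m (N + 1) ++ tb m (N + 2) = hb m (N + 1) ++ ub m N := by
  have htb : tb m (N + 2) ++ (hb m N).reverse = (hb m (N + 1)).reverse := by
    have hsuf := reverse_suffix.2 (hb_prefix_hb_succ (m := m) N)
    rw [suffix_iff_eq_drop, length_reverse, length_reverse] at hsuf
    rw [tb, hsuf]
    exact take_append_drop _ _
  apply append_cancel_right (bs := (hb m N).reverse)
  rw [append_assoc, htb, ← ub_succ_eq_append_reverse hm, append_assoc,
    ← ub_succ_eq_append_reverse hm, ub]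

lemma prefix_ub_of_prefix_hb (hm : 2 ≤ m) {w : List ℕ} {k j : ℕ} (hwk : w <+: hb m k)
    (hle : w.length ≤ (ub m j).length) : w <+: ub m j :=
  prefix_of_prefix_length_le (hwk.trans (hb_prefix_hb_of_le (le_max_left k (j + 1))))
    (((prefix_append _ _).trans (ub_concat_mod_prefix_hb hm j)).trans
      (hb_prefix_hb_of_le (le_max_right k (j + 1)))) hle

lemma exists_eq_append_cons_of_prefix_ub (hm : 0 < m) {N : ℕ} {w : List ℕ}
    (hw : w <+: ub m (N + 2)) (hlt : (hb m (N + 1) ++ ub m N).length < w.length) :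
    ∃ x, w = hb m (N + 1) ++ ub m N ++ N % m :: x ∧ N % m :: x <+: (hb m N).reverse := by
  rw [ub, ub_succ_eq_append_reverse hm, ← append_assoc] at hw
  obtain ⟨x, rfl⟩ : hb m (N + 1) ++ ub m N <+: w :=
    prefix_of_prefix_length_le (prefix_append _ _) hw hlt.le
  have hx : x <+: (hb m N).reverse := (prefix_append_right_inj _).1 hw
  obtain ⟨q, hq⟩ := exists_hb_eq_concat_mod hm N
  rcases x with _ | ⟨c, x⟩
  · simp at hlt
  · simp only [hq, reverse_append, reverse_singleton, singleton_append, cons_prefix_cons] at hx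
    exact ⟨x, by rw [hx.1], by simpa [hq] using hx.2⟩

lemma occ_eq_two {x w F : List ℕ} (hF : F ≠ []) (hx : x <+: w) (hFx : F ++ x <+: w)
    (hocc : ∀ p, p ++ x <+: w → p = [] ∨ p = F) : occ x w = 2 := by
  have key : ∀ i ≤ w.length, x.isPrefixOf (w.drop i) ↔ i = 0 ∨ i = F.length := by
    intro i hi
    rw [isPrefixOf_iff_prefix, ← prefix_append_right_inj (w.take i), take_append_drop]
    constructor
    · intro h
      rcases hocc _ h with h0 | h0 <;> [left; right] <;>
        simpa [hi] using congrArg length h0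
    · rintro (rfl | rfl)
      · simpa using hx
      · rwa [← prefix_iff_eq_take.1 ((prefix_append F x).trans hFx)]
  have hperm : ((range (w.length + 1)).filter fun i => x.isPrefixOf (w.drop i)).Perm
      [0, F.length] := by
    refine (perm_ext_iff_of_nodup (nodup_range.filter _) ?_).2 fun i => ?_
    · simpa [eq_comm] using hF
    · have := hFx.length_le
      simp only [mem_filter, mem_range, mem_cons, mem_nil_iff, or_false, length_append] at this ⊢
      constructor
      · rintro ⟨hi, h⟩; exact (key i (by omega)).1 h
      · intro h; exact ⟨by omega, (key i (by omega)).2 h⟩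
  exact hperm.length_eq

end

/-- a prefix `w` of the `m`-bonacci word `h_ω` with
`|u_n| + |t_n| < |w| ≤ |u_{n+1}|` (a type-1 prefix) is closed; more precisely,
`w = u_n t_n x` for a non-empty prefix `x` of `h_{n-2}^R`, and `u_{n-1} x` is a
border of `w` occurring exactly twice in `w` (no internal occurrence)
(here `ub m k` is the paper's `u_{k+1}`). -/
theorem type1_prefix_closed :
    ∀ m : ℕ, 2 ≤ m → ∀ n : ℕ, 2 ≤ n → ∀ w : List ℕ,
      (∃ k : ℕ, w <+: hb m k) →
      (ub m (n - 1)).length + (tb m n).length < w.length →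
      w.length ≤ (ub m n).length →
      ClosedWord w ∧
        ∃ x : List ℕ, x ≠ [] ∧ x <+: (hb m (n - 2)).reverse ∧
          w = ub m (n - 1) ++ tb m n ++ x ∧
          (ub m (n - 2) ++ x) <+: w ∧ (ub m (n - 2) ++ x) <:+ w ∧
          occ (ub m (n - 2) ++ x) w = 2 := by
  intro m hm n hn w ⟨k, hwk⟩ hlt hle
  obtain ⟨N, rfl⟩ : ∃ N, n = N + 2 := ⟨n - 2, by omega⟩
  simp only [show N + 2 - 1 = N + 1 from rfl, show N + 2 - 2 = N from rfl] at hlt hle ⊢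
  have hub := ub_succ_append_tb (by omega : 0 < m) N
  have hw := prefix_ub_of_prefix_hb hm hwk hle
  have hu : ub m (N + 1) <+: w := by
    refine prefix_of_prefix_length_le ?_ hw (by omega)
    rw [ub_succ_eq_append_reverse (by omega) (N + 1)]
    exact prefix_append _ _
  obtain ⟨x, rfl, hx⟩ := exists_eq_append_cons_of_prefix_ub (by omega) hw
    (by rw [← hub, length_append]; exact hlt)
  have hpre : ub m N ++ N % m :: x <+: hb m (N + 1) ++ ub m N ++ N % m :: x := by
    rw [ub_succ_eq_append_reverse (by omega)] at hu
    exact ((prefix_append_right_inj _).2 hx).trans hu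
  have hsuf : ub m N ++ N % m :: x <:+ hb m (N + 1) ++ ub m N ++ N % m :: x :=
    ⟨hb m (N + 1), (append_assoc _ _ _).symm⟩
  have hF := hb_ne_nil (m := m) (N + 1)
  have hocc := occ_eq_two hF hpre (by simp) fun p hp =>
    eq_nil_or_eq_hb_of_append_cons_prefix hm N hp
  exact ⟨Or.inr ⟨_, by simp, by simpa using length_pos_of_ne_nil hF, hpre, hsuf, hocc⟩,
    N % m :: x, by simp, hx, by rw [hub], hpre, hsuf, hocc⟩
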